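/- arXiv:1707.09106 — 4 statements merged into one kernel-verified Lean document; each statement's English description precedes it below -/
import Mathlib

section
/- The rotundus R_n(a_1,...,a_n) equals the trace of the product of matrices [[a_1,1],[-1,0]] · [[a_2,1],[-1,0]] ⋯ [[a_n,1],[-1,0]]. -/
open Matrix

variable {R : Type*} [CommRing R]

/-- The n×n tridiagonal "continuant" matrix with diagonal entries `a 1, ..., a n`
and 1's on the sub- and superdiagonals. -/
def triMat (n : ℕ) (a : ℕ → R) : Matrix (Fin n) (Fin n) R :=
  fun i j =>
    if (i : ℕ) = (j : ℕ) then a (i + 1)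
    else if (i : ℕ) + 1 = (j : ℕ) ∨ (j : ℕ) + 1 = (i : ℕ) then 1 else 0

/-- The continuant `K_n(a_1, ..., a_n)`, as a tridiagonal determinant. -/
def cont (n : ℕ) (a : ℕ → R) : R := (triMat n a).det

/-- The continuant with shifted index: `contE m = K_{m-1}`, so `contE 0 = K_{-1} = 0`. -/
def contE : ℕ → (ℕ → R) → R
  | 0, _ => 0
  | n + 1, a => cont n a

/-- The rotundus `R_n(a_1,...,a_n) = K_n(a_1,...,a_n) - K_{n-2}(a_2,...,a_{n-1})`,
with the conventions `K_{-1} = 0`, `K_0 = 1` (so `R_0 = 1 - (-?) `... for `n ≥ 1` it is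
`K_n - K_{n-2}`; `R_0 = 2`). -/
def rotundus : ℕ → (ℕ → R) → R
  | 0, _ => 2
  | 1, a => a 1
  | n + 2, a => cont (n + 2) a - cont n (fun i => a (i + 1))

/-- The 2×2 matrix `[[x, 1], [-1, 0]]`. -/
def slMat (x : R) : Matrix (Fin 2) (Fin 2) R := !![x, 1; -1, 0]

/-- The product `[[a_1,1],[-1,0]] ⋯ [[a_n,1],[-1,0]]`. -/
def slProd (n : ℕ) (a : ℕ → R) : Matrix (Fin 2) (Fin 2) R :=
  ((List.range n).map (fun i => slMat (a (i + 1)))).prod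


/-- The continuant, defined by the front recurrence. -/
def contK : ℕ → (ℕ → R) → R
  | 0, _ => 1
  | 1, a => a 1
  | n + 2, a => a 1 * contK (n + 1) (fun i => a (i + 1)) - contK n (fun i => a (i + 2))

/-- `K_{n-1}` with convention `K_{-1} = 0`. -/
def contKE : ℕ → (ℕ → R) → R
  | 0, _ => 0
  | n + 1, a => contK n a

/-- `K_{n-2}` with conventions `K_{-2} = -1`, `K_{-1} = 0`. -/
def contKEE : ℕ → (ℕ → R) → R
  | 0, _ => -1
  | 1, _ => 0
  | n + 2, a => contK n a

lemma triMat_submatrix_aux (n : ℕ) (a : ℕ → R) :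
    (triMat (n+1) a).submatrix Fin.succ Fin.succ = triMat n (fun i => a (i+1)) := by
  ext i j
  simp only [triMat, Matrix.submatrix_apply, Fin.val_succ]
  split_ifs <;> first | rfl | omega

lemma succAbove_one_zero_aux (n : ℕ) : ((1 : Fin (n+2)).succAbove 0 : ℕ) = 0 := by
  simp [Fin.succAbove]

lemma succAbove_one_succ_aux (n : ℕ) (j : Fin n) :
    ((1 : Fin (n+2)).succAbove (Fin.succ j) : ℕ) = (j : ℕ) + 2 := by
  rw [Fin.succAbove]
  split_ifs with h
  · exfalso
    simp [Fin.lt_iff_val_lt_val] at h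
  · simp [Fin.val_succ]

lemma cont_succ_succ (n : ℕ) (a : ℕ → R) :
    cont (n+2) a = a 1 * cont (n+1) (fun i => a (i+1)) - cont n (fun i => a (i+2)) := by
  rw [cont, Matrix.det_succ_row_zero, Fin.sum_univ_succ, Fin.sum_univ_succ]
  have h0 : (triMat (n+2) a) 0 0 = a 1 := by simp [triMat]
  have h1 : (triMat (n+2) a) 0 (Fin.succ 0) = 1 := by simp [triMat]
  have h2 : ∀ j : Fin n, (triMat (n+2) a) 0 (Fin.succ (Fin.succ j)) = 0 := by
    intro j; simp [triMat, Fin.val_succ]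
  rw [h0, h1]
  simp only [h2, mul_zero, zero_mul, Finset.sum_const_zero, add_zero]
  have hA : (triMat (n+2) a).submatrix Fin.succ ((0 : Fin (n+2)).succAbove) =
      triMat (n+1) (fun i => a (i+1)) := by
    rw [Fin.succAbove_zero, triMat_submatrix_aux]
  have hone : (Fin.succ (0 : Fin (n+1))) = (1 : Fin (n+2)) := rfl
  rw [hone, hA]
  have hB : ((triMat (n+2) a).submatrix Fin.succ ((1 : Fin (n+2)).succAbove)).det
      = cont n (fun i => a (i+2)) := by
    rw [Matrix.det_succ_column_zero, Fin.sum_univ_succ]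
    have hN0 : (triMat (n+2) a).submatrix Fin.succ ((1 : Fin (n+2)).succAbove) 0 0 = 1 := by
      simp only [Matrix.submatrix_apply, triMat]
      rw [if_neg, if_pos] <;> simp [succAbove_one_zero_aux]
    have hNi : ∀ i : Fin n,
        (triMat (n+2) a).submatrix Fin.succ ((1 : Fin (n+2)).succAbove) (Fin.succ i) 0 = 0 := by
      intro i
      simp only [Matrix.submatrix_apply, triMat]
      rw [if_neg, if_neg] <;> simp [succAbove_one_zero_aux, Fin.val_succ]
    rw [hN0]
    simp only [hNi, mul_zero, zero_mul, Finset.sum_const_zero, add_zero]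
    have hsub : ((triMat (n+2) a).submatrix Fin.succ ((1 : Fin (n+2)).succAbove)).submatrix
        ((0 : Fin (n+1)).succAbove) Fin.succ = triMat n (fun i => a (i+2)) := by
      ext i j
      simp only [Matrix.submatrix_apply, Fin.succAbove_zero, triMat, Fin.val_succ,
        succAbove_one_succ_aux]
      split_ifs <;> first | rfl | omega
    rw [hsub, cont]
    simp
  rw [hB]
  simp only [cont, Fin.val_zero, Fin.val_one, pow_zero, pow_one]
  ring

lemma cont_eq_contK : ∀ (n : ℕ) (a : ℕ → R), cont n a = contK n a := by
  intro n
  induction n using Nat.strong_induction_on with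
  | _ n ih =>
    match n with
    | 0 => intro a; simp [cont, contK, Matrix.det_fin_zero]
    | 1 => intro a; simp [cont, contK, Matrix.det_fin_one, triMat]
    | (m+2) =>
      intro a
      rw [cont_succ_succ, contK, ih (m+1) (by omega), ih m (by omega)]

/-- The claimed form of the 2×2 matrix product. -/
def slB (n : ℕ) (a : ℕ → R) : Matrix (Fin 2) (Fin 2) R :=
  !![contK n a, contKE n a;
     -(contKE n (fun i => a (i+1))), -(contKEE n (fun i => a (i+1)))]

lemma contK_succ (n : ℕ) (a : ℕ → R) :
    contK (n+1) a = a 1 * contK n (fun i => a (i+1)) - contKE n (fun i => a (i+2)) := by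
  match n with
  | 0 => simp [contK, contKE]
  | m+1 => rw [contK, contKE]

lemma contKE_succ (n : ℕ) (a : ℕ → R) :
    contKE (n+1) a = a 1 * contKE n (fun i => a (i+1)) - contKEE n (fun i => a (i+2)) := by
  match n with
  | 0 => simp [contK, contKE, contKEE]
  | 1 => simp [contK, contKE, contKEE]
  | m+2 => rw [contKE, contK, contKE, contKEE]

lemma contKEE_succ (n : ℕ) (a : ℕ → R) :
    contKEE (n+1) a = contKE n a := by
  match n with
  | 0 => rfl
  | m+1 => rfl

lemma slProd_succ (n : ℕ) (a : ℕ → R) :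
    slProd (n+1) a = slMat (a 1) * slProd n (fun i => a (i+1)) := by
  rw [slProd, slProd, List.range_succ_eq_map, List.map_cons, List.prod_cons, List.map_map]
  rfl

lemma slProd_eq_slB : ∀ (n : ℕ) (a : ℕ → R), slProd n a = slB n a := by
  intro n
  induction n with
  | zero =>
    intro a
    rw [slProd, slB]
    simp [contK, contKE, contKEE]
    rw [Matrix.one_fin_two]
  | succ m ih =>
    intro a
    have hf : (fun i => a (i+1+1)) = (fun i => a (i+2)) := by
      funext i; norm_num [add_assoc]
    have e3 : contKE (m+1) (fun i => a (i+1)) = contK m (fun i => a (i+1)) := rfl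
    rw [slProd_succ, ih]
    ext i j
    fin_cases i <;> fin_cases j <;>
      ((simp [slB, slMat, Matrix.mul_apply, Fin.sum_univ_two, hf, e3,
          contK_succ, contKE_succ, contKEE_succ]) <;> ring)

theorem rotundus_eq_trace (n : ℕ) (a : ℕ → R) :
    rotundus n a = Matrix.trace (slProd n a) := by
  rw [slProd_eq_slB, slB, Matrix.trace_fin_two]
  match n with
  | 0 => simp [rotundus, contK, contKEE]; norm_num
  | 1 => simp [rotundus, contK, contKEE]
  | m+2 =>
    rw [rotundus, cont_eq_contK, cont_eq_contK]
    simp [contKEE]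
    ring
end

section
/- Let C be the n×n tridiagonal continuant matrix with diagonal a_1,...,a_n and 1's on the off-diagonals, and let E be the n×n matrix with 1 in the top-right corner, −1 in the bottom-left corner, and 0 elsewhere. Then the determinant of the 2n×2n block matrix [[E, C],[−C, E]] equals R_n(a_1,...,a_n)², where R_n is the rotundus. -/
open Matrix Polynomial

variable {R : Type*} [CommRing R]

/-- The n×n matrix with 1 in the top-right corner, -1 in the bottom-left corner. -/
def cornerE (n : ℕ) : Matrix (Fin n) (Fin n) R :=
  fun i j =>
    if (i : ℕ) = 0 ∧ (j : ℕ) = n - 1 then 1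
    else if (i : ℕ) = n - 1 ∧ (j : ℕ) = 0 then -1 else 0

-- block factorization
lemma detFactor {S : Type*} [CommRing S] {n : ℕ} (j : S) (hj : j * j = -1)
    (A B : Matrix (Fin n) (Fin n) S) :
    (fromBlocks A B (-B) A).det = (A + j • B).det * (A - j • B).det := by
  have h : fromBlocks A B (-B) A =
      (fromBlocks 1 0 (j • 1) 1 : Matrix _ _ S) * fromBlocks (A + j • B) B 0 (A - j • B) *
        fromBlocks 1 0 (-(j • (1 : Matrix (Fin n) (Fin n) S))) 1 := by
    rw [fromBlocks_multiply, fromBlocks_multiply]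
    rw [fromBlocks_inj]
    refine ⟨?_,?_,?_,?_⟩ <;>
      simp [Matrix.smul_mul, Matrix.mul_smul, smul_smul, hj, Matrix.mul_neg, Matrix.neg_mul,
        neg_smul, one_smul, smul_add]
  rw [h, Matrix.det_mul, Matrix.det_mul, det_fromBlocks_zero₁₂, det_fromBlocks_zero₁₂,
    det_fromBlocks_zero₂₁, Matrix.det_one]
  ring

-- maps
lemma triMat_map {S : Type*} [CommRing S] (f : R →+* S) (n : ℕ) (a : ℕ → R) :
    (triMat n a).map f = triMat n (fun i => f (a i)) := by
  ext i k
  simp only [Matrix.map_apply, triMat]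
  split <;> [skip; split] <;> simp

lemma cornerE_map {S : Type*} [CommRing S] (f : R →+* S) (n : ℕ) :
    (cornerE n : Matrix (Fin n) (Fin n) R).map f = cornerE n := by
  ext i k
  simp only [Matrix.map_apply, cornerE]
  split <;> [skip; split] <;> simp

lemma cont_map {S : Type*} [CommRing S] (f : R →+* S) (n : ℕ) (a : ℕ → R) :
    f (cont n a) = cont n (fun i => f (a i)) := by
  rw [cont, cont, ← triMat_map]
  exact (RingHom.map_det f _)

lemma rotundus_map {S : Type*} [CommRing S] (f : R →+* S) (n : ℕ) (a : ℕ → R) :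
    f (rotundus n a) = rotundus n (fun i => f (a i)) := by
  match n with
  | 0 => simp [rotundus, map_ofNat]
  | 1 => simp [rotundus]
  | n + 2 => simp [rotundus, map_sub, cont_map]


-- auxiliary: commuting row updates
lemma updateRow_comm' {S : Type*} [CommRing S] {n : ℕ} (M : Matrix (Fin n) (Fin n) S)
    {i i' : Fin n} (h : i ≠ i') (r r' : Fin n → S) :
    updateRow (updateRow M i r) i' r' = updateRow (updateRow M i' r') i r := by
  ext u v
  simp only [Matrix.updateRow_apply]
  split_ifs with h1 h2 <;> simp_all

-- the determinant D1 = (-1)^(m+1)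
lemma detAux {S : Type*} [CommRing S] (m : ℕ) (b : ℕ → S) :
    (updateRow (triMat (m + 2) b) 0 (Pi.single (Fin.last (m + 1)) 1)).det
      = (-1) ^ (m + 1) := by
  set M := updateRow (triMat (m + 2) b) 0 (Pi.single (Fin.last (m + 1)) 1) with hMdef
  have hperm := Matrix.det_permute (finRotate (m + 2)) M
  have htri : (M.submatrix (finRotate (m + 2)) id).BlockTriangular id := by
    intro u v huv
    simp only [Matrix.submatrix_apply, id_eq]
    rcases eq_or_ne u (Fin.last (m + 1)) with rfl | hu
    · rw [finRotate_last, hMdef, Matrix.updateRow_self]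
      exact Pi.single_eq_of_ne (ne_of_lt huv) 1
    · have hval : ((finRotate (m + 2)) u : ℕ) = (u : ℕ) + 1 := coe_finRotate_of_ne_last hu
      have hne : (finRotate (m + 2)) u ≠ 0 := by
        intro hc
        rw [hc] at hval
        simp at hval
      rw [hMdef, Matrix.updateRow_ne hne]
      have hlt : (v : ℕ) < (u : ℕ) := huv
      rw [triMat, if_neg (by omega), if_neg (by omega)]
  have hdiag : ∀ k, (M.submatrix (finRotate (m + 2)) id) k k = 1 := by
    intro k
    simp only [Matrix.submatrix_apply, id_eq]
    rcases eq_or_ne k (Fin.last (m + 1)) with rfl | hk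
    · rw [finRotate_last, hMdef, Matrix.updateRow_self, Pi.single_eq_same]
    · have hval : ((finRotate (m + 2)) k : ℕ) = (k : ℕ) + 1 := coe_finRotate_of_ne_last hk
      have hne : (finRotate (m + 2)) k ≠ 0 := by
        intro hc
        rw [hc] at hval
        simp at hval
      rw [hMdef, Matrix.updateRow_ne hne]
      rw [triMat, if_neg (by omega), if_pos (by omega)]
  have hN : (M.submatrix (finRotate (m + 2)) id).det = 1 := by
    rw [Matrix.det_of_upperTriangular htri]
    exact Finset.prod_eq_one fun k _ => hdiag k
  rw [hN] at hperm
  have hsign : (Equiv.Perm.sign (finRotate (m + 2)) : ℤ) = (-1) ^ (m + 1) := by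
    rw [sign_finRotate]
    simp
  rw [hsign] at hperm
  push_cast at hperm
  have h2 : ((-1 : S) ^ (m + 1)) * ((-1 : S) ^ (m + 1)) = 1 := by
    rw [← pow_add]
    exact Even.neg_one_pow ⟨m + 1, by ring⟩
  calc M.det = ((-1 : S) ^ (m + 1) * (-1 : S) ^ (m + 1)) * M.det := by rw [h2, one_mul]
    _ = (-1 : S) ^ (m + 1) * ((-1 : S) ^ (m + 1) * M.det) := by ring
    _ = (-1 : S) ^ (m + 1) * 1 := by rw [← hperm]
    _ = (-1 : S) ^ (m + 1) := mul_one _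


-- D2 via reversal
lemma detAux2 {S : Type*} [CommRing S] (m : ℕ) (a : ℕ → S) :
    (updateRow (triMat (m + 2) a) (Fin.last (m + 1)) (Pi.single 0 1)).det
      = (-1) ^ (m + 1) := by
  have hsub : (updateRow (triMat (m + 2) a) (Fin.last (m + 1)) (Pi.single 0 1)).submatrix
      Fin.revPerm Fin.revPerm
      = updateRow (triMat (m + 2) (fun k => a (m + 3 - k))) 0
          (Pi.single (Fin.last (m + 1)) 1) := by
    ext u v
    simp only [Matrix.submatrix_apply, Fin.revPerm_apply]
    rcases eq_or_ne u 0 with rfl | hu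
    · have h0 : Fin.rev (0 : Fin (m + 2)) = Fin.last (m + 1) := by
        ext
        simp [Fin.val_rev]
      rw [h0, Matrix.updateRow_self, Matrix.updateRow_self]
      rcases eq_or_ne v (Fin.last (m + 1)) with rfl | hv
      · have h1 : Fin.rev (Fin.last (m + 1)) = (0 : Fin (m + 2)) := by
          ext
          simp [Fin.val_rev]
        rw [h1, Pi.single_eq_same, Pi.single_eq_same]
      · have h1 : Fin.rev v ≠ 0 := by
          intro hc
          apply hv
          ext
          have := congrArg Fin.val hc
          simp only [Fin.val_rev, Fin.val_zero, Fin.val_last] at this ⊢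
          omega
        rw [Pi.single_eq_of_ne h1, Pi.single_eq_of_ne hv]
    · have h1 : Fin.rev u ≠ Fin.last (m + 1) := by
        intro hc
        apply hu
        ext
        have := congrArg Fin.val hc
        simp only [Fin.val_rev, Fin.val_zero, Fin.val_last] at this ⊢
        omega
      rw [Matrix.updateRow_ne h1, Matrix.updateRow_ne hu]
      have hvu : (Fin.rev u : ℕ) = m + 1 - (u : ℕ) := by simp [Fin.val_rev]
      have hvv : (Fin.rev v : ℕ) = m + 1 - (v : ℕ) := by simp [Fin.val_rev]
      have hu2 : (u : ℕ) < m + 2 := u.isLt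
      have hv2 : (v : ℕ) < m + 2 := v.isLt
      rw [triMat, triMat]
      rcases eq_or_ne (u : ℕ) (v : ℕ) with he | he
      · rw [if_pos (by omega), if_pos he]
        congr 1
        omega
      · rw [if_neg (by omega), if_neg he]
        by_cases hoff : (u : ℕ) + 1 = (v : ℕ) ∨ (v : ℕ) + 1 = (u : ℕ)
        · rw [if_pos (by omega), if_pos hoff]
        · rw [if_neg (by omega), if_neg hoff]
  have := Matrix.det_submatrix_equiv_self (Fin.revPerm)
      (updateRow (triMat (m + 2) a) (Fin.last (m + 1)) (Pi.single 0 1))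
  rw [← this, hsub, detAux]

-- T via swap and two cofactor expansions
lemma detAux3 {S : Type*} [CommRing S] (m : ℕ) (a : ℕ → S) :
    (updateRow (updateRow (triMat (m + 2) a) 0 (Pi.single (Fin.last (m + 1)) 1))
        (Fin.last (m + 1)) (Pi.single 0 1)).det
      = - cont m (fun i => a (i + 1)) := by
  set M3 := updateRow (updateRow (triMat (m + 2) a) 0 (Pi.single (Fin.last (m + 1)) 1))
      (Fin.last (m + 1)) (Pi.single 0 1) with hM3
  have hne : (0 : Fin (m + 2)) ≠ Fin.last (m + 1) := by
    simp [Fin.ext_iff]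
  have hperm := Matrix.det_permute (Equiv.swap (0 : Fin (m + 2)) (Fin.last (m + 1))) M3
  set P := M3.submatrix (Equiv.swap (0 : Fin (m + 2)) (Fin.last (m + 1))) id with hP
  have hrow0 : ∀ v, P 0 v = if v = 0 then 1 else 0 := by
    intro v
    rw [hP]
    simp only [Matrix.submatrix_apply, id_eq, Equiv.swap_apply_left]
    rw [hM3, Matrix.updateRow_self, Pi.single_apply]
  have hdet0 : P.det = (P.submatrix Fin.succ Fin.succ).det := by
    rw [Matrix.det_succ_row_zero]
    rw [Finset.sum_eq_single (0 : Fin (m + 2))]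
    · rw [hrow0 0, if_pos rfl]
      simp
    · intro b _ hb
      rw [hrow0 b, if_neg hb, mul_zero, zero_mul]
    · intro h
      exact absurd (Finset.mem_univ _) h
  set Q := P.submatrix Fin.succ Fin.succ with hQ
  have hrowlast : ∀ v, Q (Fin.last m) v = if v = Fin.last m then 1 else 0 := by
    intro v
    rw [hQ, hP]
    simp only [Matrix.submatrix_apply, id_eq, Fin.succ_last, Equiv.swap_apply_right]
    rw [hM3, Matrix.updateRow_ne hne, Matrix.updateRow_self, Pi.single_apply]
    rcases eq_or_ne v (Fin.last m) with rfl | hv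
    · rw [if_pos (Fin.succ_last m ▸ rfl), if_pos rfl]
    · rw [if_neg (fun hc => hv (by
        have := congrArg Fin.val hc
        simp only [Fin.val_succ, Fin.val_last] at this
        exact Fin.ext (by simp only [Fin.val_last]; omega))), if_neg hv]
  have hdet1 : Q.det = (Q.submatrix Fin.castSucc Fin.castSucc).det := by
    rw [Matrix.det_succ_row Q (Fin.last m), Finset.sum_eq_single (Fin.last m)]
    · rw [hrowlast, if_pos rfl, Fin.succAbove_last]
      have hcoef : (-1 : S) ^ ((Fin.last m : ℕ) + (Fin.last m : ℕ)) = 1 :=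
        Even.neg_one_pow ⟨(Fin.last m : ℕ), rfl⟩
      rw [hcoef]
      ring
    · intro b _ hb
      rw [hrowlast b, if_neg hb, mul_zero, zero_mul]
    · intro h
      exact absurd (Finset.mem_univ _) h
  have hQsub : Q.submatrix Fin.castSucc Fin.castSucc = triMat m (fun i => a (i + 1)) := by
    ext u v
    rw [hQ, hP]
    simp only [Matrix.submatrix_apply, id_eq]
    have hu0 : Fin.succ (Fin.castSucc u) ≠ 0 := Fin.succ_ne_zero _
    have hul : Fin.succ (Fin.castSucc u) ≠ Fin.last (m + 1) := by
      intro hc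
      have h1 := congrArg Fin.val hc
      have h2 := u.isLt
      simp only [Fin.val_succ, Fin.coe_castSucc, Fin.val_last] at h1
      omega
    rw [Equiv.swap_apply_of_ne_of_ne hu0 hul, hM3, Matrix.updateRow_ne hul,
      Matrix.updateRow_ne hu0]
    rw [triMat, triMat]
    simp only [Fin.val_succ, Fin.coe_castSucc]
    rcases eq_or_ne (u : ℕ) (v : ℕ) with he | he
    · rw [if_pos (by omega), if_pos he]
    · rw [if_neg (by omega), if_neg he]
      by_cases hoff : (u : ℕ) + 1 = (v : ℕ) ∨ (v : ℕ) + 1 = (u : ℕ)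
      · rw [if_pos (by omega), if_pos hoff]
      · rw [if_neg (by omega), if_neg hoff]
  have hsign : (Equiv.Perm.sign (Equiv.swap (0 : Fin (m + 2)) (Fin.last (m + 1))) : ℤ) = -1 := by
    rw [Equiv.Perm.sign_swap hne]
    rfl
  rw [hdet0, hdet1, hQsub, hsign, ← cont] at hperm
  push_cast at hperm
  linear_combination hperm
-- key determinant computation
set_option maxHeartbeats 1600000 in
lemma key {S : Type*} [CommRing S] (j : S) (hj : j * j = -1) (m : ℕ) (a : ℕ → S) :
    (triMat (m + 2) a + j • cornerE (m + 2)).det = rotundus (m + 2) a := by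
  set C := triMat (m + 2) a with hC
  set eN : Fin (m + 2) → S := Pi.single (Fin.last (m + 1)) 1 with heN
  set e0 : Fin (m + 2) → S := Pi.single (0 : Fin (m + 2)) 1 with he0
  have hne : (Fin.last (m + 1)) ≠ (0 : Fin (m + 2)) := by
    simp [Fin.ext_iff]
  have hM : triMat (m + 2) a + j • cornerE (m + 2)
      = updateRow (updateRow C 0 (C 0 + j • eN)) (Fin.last (m + 1))
          (C (Fin.last (m + 1)) + (-j) • e0) := by
    ext u v
    simp only [Matrix.add_apply, Matrix.smul_apply, smul_eq_mul, Matrix.updateRow_apply,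
      Pi.add_apply, Pi.smul_apply, hC, heN, he0, cornerE, triMat, Pi.single_apply,
      Fin.ext_iff, Fin.val_zero, Fin.val_last]
    have hu := u.isLt
    have hv := v.isLt
    split_ifs <;>
      (try simp only [or_false, false_or, mul_zero, mul_one, add_zero, zero_add] at *) <;>
      first | rfl | (exfalso; omega) | (exact congrArg a (by omega)) | ring1
  rw [hM, Matrix.det_updateRow_add]
  have hA : (updateRow C 0 (C 0 + j • eN)) (Fin.last (m + 1)) = C (Fin.last (m + 1)) :=
    Matrix.updateRow_ne hne
  rw [← hA, Matrix.updateRow_eq_self, Matrix.det_updateRow_add, Matrix.updateRow_eq_self,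
    Matrix.det_updateRow_smul, Matrix.det_updateRow_smul,
    updateRow_comm' C hne.symm (C 0 + j • eN) e0, Matrix.det_updateRow_add,
    Matrix.det_updateRow_smul]
  have hB : (updateRow C (Fin.last (m + 1)) e0) 0 = C 0 := Matrix.updateRow_ne hne.symm
  rw [← hB, Matrix.updateRow_eq_self, updateRow_comm' C hne e0 eN]
  rw [hC, heN, he0, detAux m a, detAux2 m a, detAux3 m a]
  have hrot : rotundus (m + 2) a = cont (m + 2) a - cont m (fun i => a (i + 1)) := rfl
  rw [hrot, ← cont]
  linear_combination (cont m fun i => a (i + 1)) * hj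

theorem rotundus_sq_eq_det (n : ℕ) (hn : 2 ≤ n) (a : ℕ → R) :
    (Matrix.fromBlocks (cornerE n) (triMat n a) (-(triMat n a)) (cornerE n)).det =
      (rotundus n a) ^ 2 := by
  obtain ⟨m, rfl⟩ : ∃ m, n = m + 2 := ⟨n - 2, by omega⟩
  rcases subsingleton_or_nontrivial R with h | h
  · exact Subsingleton.elim _ _
  set p : R[X] := X ^ 2 + 1 with hpdef
  have hp : p.Monic := by
    have := Polynomial.monic_X_pow_add_C (1 : R) (n := 2) (by norm_num)
    simpa [hpdef] using this
  have hpdeg : p.degree = 2 := by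
    have := Polynomial.degree_X_pow_add_C (n := 2) (by norm_num) (1 : R)
    simpa [hpdef] using this
  set f : R →+* AdjoinRoot p := AdjoinRoot.of p with hfdef
  have hfinj : Function.Injective f := by
    intro r s hrs
    have h1 : AdjoinRoot.mk p (Polynomial.C r) = AdjoinRoot.mk p (Polynomial.C s) := hrs
    have h2 := congrArg (AdjoinRoot.modByMonicHom hp) h1
    rw [AdjoinRoot.modByMonicHom_mk, AdjoinRoot.modByMonicHom_mk] at h2
    have hlt : ∀ r : R, Polynomial.C r %ₘ p = Polynomial.C r := by
      intro r
      refine (Polynomial.modByMonic_eq_self_iff hp).2 ?_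
      refine lt_of_le_of_lt Polynomial.degree_C_le ?_
      rw [hpdeg]
      norm_num
    rw [hlt, hlt] at h2
    exact Polynomial.C_injective h2
  set i : AdjoinRoot p := AdjoinRoot.root p with hidef
  have hi : i * i = -1 := by
    have h0 := AdjoinRoot.eval₂_root p
    rw [hpdef] at h0
    simp only [Polynomial.eval₂_add, Polynomial.eval₂_pow, Polynomial.eval₂_X,
      Polynomial.eval₂_one] at h0
    rw [← hidef] at h0
    linear_combination h0
  have hi' : (-i) * (-i) = -1 := by linear_combination hi
  apply hfinj
  rw [RingHom.map_det]
  have hmap : (RingHom.mapMatrix f) (fromBlocks (cornerE (m+2)) (triMat (m+2) a)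
      (-triMat (m+2) a) (cornerE (m+2))) =
      fromBlocks (cornerE (m+2)) (triMat (m+2) (fun k => f (a k)))
        (-(triMat (m+2) (fun k => f (a k)))) (cornerE (m+2)) := by
    show Matrix.map _ f = _
    rw [Matrix.fromBlocks_map]
    have hneg : (-(triMat (m+2) a)).map (f : R → AdjoinRoot p) =
        -(triMat (m+2) (fun k => f (a k))) := by
      rw [← triMat_map f]
      ext u v
      exact map_neg f _
    rw [triMat_map, cornerE_map, hneg]
  rw [hmap, detFactor i hi]
  set C' := triMat (m+2) (fun k => f (a k)) with hC
  set E' : Matrix (Fin (m+2)) (Fin (m+2)) (AdjoinRoot p) := cornerE (m+2) with hE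
  have hii : i * -i = 1 := by linear_combination -hi
  have hii' : -i * i = 1 := by linear_combination -hi
  have e1 : E' + i • C' = i • (C' + (-i) • E') := by
    rw [smul_add, smul_smul, hii, one_smul]
    abel
  have e2 : E' - i • C' = (-i) • (C' + i • E') := by
    rw [smul_add, smul_smul, hii', one_smul, neg_smul]
    abel
  rw [e1, e2, Matrix.det_smul, Matrix.det_smul, key (-i) hi' m _, key i hi m _]
  rw [map_pow, rotundus_map]
  have hcard : (Fintype.card (Fin (m + 2))) = m + 2 := by simp
  rw [hcard]
  have h1 : i ^ (m + 2) * (-i) ^ (m + 2) = 1 := by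
    rw [← mul_pow, hii, one_pow]
  linear_combination (rotundus (m + 2) fun k => f (a k)) ^ 2 * h1
end

section
/- Let C be the n×n tridiagonal continuant matrix with diagonal a_1,...,a_n and 1's on the off-diagonals, and let F be the n×n matrix with 1 in both the top-right and bottom-left corners and 0 elsewhere. Then the determinant of the 2n×2n block matrix [[F, C],[C, F]] equals (−1)^n · (R_n(a_1,...,a_n)² − 4). -/
open Matrix

variable {R : Type*} [CommRing R]

/-- The n×n matrix with 1 in both the top-right and bottom-left corners. -/
def cornerF (n : ℕ) : Matrix (Fin n) (Fin n) R :=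
  fun i j =>
    if ((i : ℕ) = 0 ∧ (j : ℕ) = n - 1) ∨ ((i : ℕ) = n - 1 ∧ (j : ℕ) = 0) then 1 else 0

/-!
Block elimination gives `det [[F, C], [C, F]] = det (C + F) * det (F - C)`. The perturbation
`t • F` only touches the first and last rows of `C`, so multilinearity in these two rows gives
`det (C + t • F) = K_n + 2 t (-1)^(n+1) - t^2 K_{n-2}(a_2, …, a_{n-1})`: the linear terms are
corner cofactors of `C`, whose minors are unitriangular, and the quadratic term is the minor
with both boundary rows and columns deleted. Hence `det (C ± F) = R_n ∓ 2 (-1)^n`, and the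
product of the two factors is a difference of squares.
-/

theorem det_fromBlocks_eq_det_add_mul_det_sub {n : Type*} [Fintype n] [DecidableEq n]
    (A B : Matrix n n R) : (fromBlocks A B B A).det = (A + B).det * (A - B).det := by
  have h : fromBlocks 1 1 0 1 * fromBlocks A B B A * fromBlocks 1 (-1) 0 1 =
      fromBlocks (A + B) 0 B (A - B) := by
    simp only [fromBlocks_multiply, Matrix.one_mul, Matrix.mul_one, Matrix.zero_mul,
      Matrix.mul_zero, Matrix.mul_neg, zero_add, add_zero]
    congr 1 <;> abel
  simpa [det_fromBlocks_zero₂₁, det_fromBlocks_zero₁₂] using congrArg det h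

theorem det_updateRow_add_smul {n : Type*} [Fintype n] [DecidableEq n]
    (M : Matrix n n R) (i : n) (u : n → R) (s : R) :
    (M.updateRow i (M i + s • u)).det = M.det + s * (M.updateRow i u).det := by
  rw [det_updateRow_add, det_updateRow_smul, updateRow_eq_self]

theorem det_updateRow_add_smul_updateRow_add_smul {n : Type*} [Fintype n] [DecidableEq n]
    (M : Matrix n n R) {i i' : n} (h : i ≠ i') (u v : n → R) (s t : R) :
    ((M.updateRow i (M i + s • u)).updateRow i' (M i' + t • v)).det =
      M.det + s * (M.updateRow i u).det + t * (M.updateRow i' v).det +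
        s * t * ((M.updateRow i u).updateRow i' v).det := by
  have hrow : ∀ x, (M.updateRow i x) i' = M i' := fun x => updateRow_ne h.symm
  have hrow' : (M.updateRow i' v) i = M i := updateRow_ne h
  rw [← hrow (M i + s • u), det_updateRow_add_smul, det_updateRow_add_smul, updateRow_comm _ h,
    ← hrow', det_updateRow_add_smul, updateRow_comm _ h.symm]
  ring

theorem det_eq_of_row_eq_single {m : ℕ} (A : Matrix (Fin (m + 1)) (Fin (m + 1)) R)
    (i j : Fin (m + 1)) (h : A i = Pi.single j 1) :
    A.det = (-1) ^ (i + j : ℕ) * (A.submatrix i.succAbove j.succAbove).det :=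
  calc A.det = (A.updateRow i (Pi.single j 1)).det := by rw [← h, updateRow_eq_self]
    _ = adjugate A j i := (adjugate_apply A j i).symm
    _ = _ := adjugate_fin_succ_eq_det_submatrix A j i

theorem triMat_transpose (n : ℕ) (a : ℕ → R) : (triMat n a)ᵀ = triMat n a := by
  ext i j
  simp only [transpose_apply, triMat]
  split_ifs <;> grind

theorem det_triMat_submatrix_succ_castSucc (m : ℕ) (a : ℕ → R) :
    ((triMat (m + 1) a).submatrix Fin.succ Fin.castSucc).det = 1 := by
  rw [det_of_isUpperTriangular, Finset.prod_eq_one]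
  · intro i _
    simp [triMat]
  · intro i j hji
    have : (j : ℕ) < i := hji
    simp only [submatrix_apply, triMat, Fin.val_succ, Fin.val_castSucc]
    split_ifs <;> first | rfl | omega

theorem det_triMat_updateRow_zero (m : ℕ) (a : ℕ → R) :
    ((triMat (m + 2) a).updateRow 0 (Pi.single (Fin.last (m + 1)) 1)).det = (-1) ^ (m + 1) := by
  rw [det_eq_of_row_eq_single _ 0 (Fin.last (m + 1)) (updateRow_self ..),
    submatrix_updateRow_succAbove, Fin.succAbove_zero, Fin.succAbove_last,
    det_triMat_submatrix_succ_castSucc]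
  simp

theorem det_triMat_updateRow_last (m : ℕ) (a : ℕ → R) :
    ((triMat (m + 2) a).updateRow (Fin.last (m + 1)) (Pi.single 0 1)).det = (-1) ^ (m + 1) := by
  -- the opposite corner cofactor, as the adjugate of a symmetric matrix is symmetric
  rw [← adjugate_apply, ← triMat_transpose, ← adjugate_transpose, transpose_apply, adjugate_apply,
    det_triMat_updateRow_zero]

theorem det_triMat_updateRow_zero_updateRow_last (m : ℕ) (a : ℕ → R) :
    (((triMat (m + 2) a).updateRow 0 (Pi.single (Fin.last (m + 1)) 1)).updateRow
      (Fin.last (m + 1)) (Pi.single 0 1)).det = -cont m (fun i => a (i + 1)) := by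
  rw [det_eq_of_row_eq_single _ (Fin.last (m + 1)) 0 (updateRow_self ..),
    submatrix_updateRow_succAbove, det_eq_of_row_eq_single _ 0 (Fin.last m)]
  · have hminor : ((triMat (m + 2) a).updateRow 0 (Pi.single (Fin.last (m + 1)) 1)).submatrix
        (fun i : Fin m => i.succ.castSucc) (fun j => j.castSucc.succ) =
          triMat m (fun i => a (i + 1)) := by
      ext i j
      rw [submatrix_apply, updateRow_ne (Fin.castSucc_ne_zero_iff.mpr (Fin.succ_ne_zero i))]
      simp only [triMat, Fin.val_succ, Fin.val_castSucc]
      split_ifs <;> first | rfl | omega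
    simp only [Fin.succAbove_zero, Fin.succAbove_last, submatrix_submatrix, Function.comp_def,
      hminor, Fin.val_last, Fin.val_zero, cont]
    rw [← mul_assoc, ← pow_add, show m + 1 + 0 + (0 + m) = 2 * m + 1 by ring, pow_succ, pow_mul]
    simp
  · ext j
    simp [Pi.single_apply, ← Fin.succ_last]

theorem add_smul_cornerF_eq_updateRow_updateRow (m : ℕ)
    (M : Matrix (Fin (m + 2)) (Fin (m + 2)) R) (t : R) :
    M + t • cornerF (m + 2) =
      (M.updateRow 0 (M 0 + t • Pi.single (Fin.last (m + 1)) 1)).updateRow (Fin.last (m + 1))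
        (M (Fin.last (m + 1)) + t • Pi.single 0 1) := by
  ext i j
  simp only [Matrix.add_apply, Matrix.smul_apply, updateRow_apply, cornerF, Pi.add_apply,
    Pi.smul_apply, Pi.single_apply, Fin.ext_iff, Fin.val_last, Fin.val_zero, smul_eq_mul]
  split_ifs <;> simp_all <;> congr <;> exact Fin.ext ‹_›

theorem det_triMat_add_smul_cornerF (m : ℕ) (a : ℕ → R) (t : R) :
    (triMat (m + 2) a + t • cornerF (m + 2)).det =
      cont (m + 2) a + 2 * t * (-1) ^ (m + 1) - t ^ 2 * cont m (fun i => a (i + 1)) := by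
  rw [add_smul_cornerF_eq_updateRow_updateRow,
    det_updateRow_add_smul_updateRow_add_smul _ Fin.last_pos.ne, det_triMat_updateRow_zero,
    det_triMat_updateRow_last, det_triMat_updateRow_zero_updateRow_last]
  unfold cont
  ring

theorem rotundus_symmetric_det (n : ℕ) (hn : 2 ≤ n) (a : ℕ → R) :
    (Matrix.fromBlocks (cornerF n) (triMat n a) (triMat n a) (cornerF n)).det =
      (-1) ^ n * ((rotundus n a) ^ 2 - 4) := by
  obtain ⟨m, rfl⟩ : ∃ m, n = m + 2 := ⟨n - 2, by omega⟩
  have hplus :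
      cornerF (m + 2) + triMat (m + 2) a = triMat (m + 2) a + (1 : R) • cornerF (m + 2) := by
    rw [one_smul]; exact add_comm _ _
  have hminus : cornerF (m + 2) - triMat (m + 2) a =
      -(triMat (m + 2) a + (-1 : R) • cornerF (m + 2)) := by
    rw [neg_one_smul]; abel
  rw [det_fromBlocks_eq_det_add_mul_det_sub, hplus, hminus, det_neg, det_triMat_add_smul_cornerF,
    det_triMat_add_smul_cornerF, Fintype.card_fin, rotundus]
  have hsq : ((-1 : R) ^ m) ^ 2 = 1 := by rw [← pow_mul, pow_mul']; norm_num
  linear_combination (-4 * (-1 : R) ^ m) * hsq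
end

section
/- If M = [[a_1,1],[−1,0]]⋯[[a_n,1],[−1,0]] = −Id (the Conway–Coxeter condition), then K_{n−1}(a_i,...,a_{i+n−2}) = 0 and K_n(a_i,...,a_{i+n−1}) = −1 for all i, where (a_i) is extended n-periodically. -/
open Matrix

variable {R : Type*} [CommRing R]

lemma cont_zero (a : ℕ → R) : cont 0 a = 1 := by
  simp [cont, Matrix.det_fin_zero]

lemma cont_one (a : ℕ → R) : cont 1 a = a 1 := by
  simp [cont, Matrix.det_fin_one, triMat]

lemma tri_sub1 (n : ℕ) (a : ℕ → R) :
    (triMat (n + 2) a).submatrix Fin.succ Fin.succ = triMat (n + 1) (fun i => a (i + 1)) := by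
  ext i j
  by_cases h : (i : ℕ) = (j : ℕ)
  · have : i = j := Fin.ext h
    subst this
    simp [triMat]
  · simp only [Matrix.submatrix_apply, triMat, Fin.val_succ]
    rw [if_neg (by omega), if_neg h]
    have hiff : ((i : ℕ) + 1 + 1 = (j : ℕ) + 1 ∨ (j : ℕ) + 1 + 1 = (i : ℕ) + 1) ↔
        ((i : ℕ) + 1 = (j : ℕ) ∨ (j : ℕ) + 1 = (i : ℕ)) := by omega
    simp [hiff]

lemma tri_sub2 (n : ℕ) (a : ℕ → R) :
    (triMat (n + 2) a).submatrix (Fin.succ ∘ Fin.succ) (Fin.succ ∘ Fin.succ)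
      = triMat n (fun i => a (i + 2)) := by
  ext i j
  by_cases h : (i : ℕ) = (j : ℕ)
  · have : i = j := Fin.ext h
    subst this
    simp [triMat]
  · simp only [Matrix.submatrix_apply, triMat, Function.comp_apply, Fin.val_succ]
    rw [if_neg (by omega), if_neg h]
    have hiff : ((i : ℕ) + 1 + 1 + 1 = (j : ℕ) + 1 + 1 ∨ (j : ℕ) + 1 + 1 + 1 = (i : ℕ) + 1 + 1) ↔
        ((i : ℕ) + 1 = (j : ℕ) ∨ (j : ℕ) + 1 = (i : ℕ)) := by omega
    simp [hiff]

lemma det_expand (n : ℕ) (a : ℕ → R) :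
    (triMat (n + 2) a).det = a 1 * ((triMat (n+2) a).submatrix Fin.succ Fin.succ).det
      - ((triMat (n+2) a).submatrix (Fin.succ ∘ Fin.succ) (Fin.succ ∘ Fin.succ)).det := by
  rw [Matrix.det_succ_row_zero, Fin.sum_univ_succ, Fin.sum_univ_succ]
  have hz : ∀ j : Fin n, triMat (n+2) a 0 j.succ.succ = 0 := by
    intro j; simp [triMat]
  simp only [hz, mul_zero, zero_mul, Finset.sum_const_zero, add_zero]
  have h00 : triMat (n+2) a 0 0 = a 1 := by simp [triMat]
  have h01 : triMat (n+2) a 0 (0 : Fin (n+1)).succ = 1 := by simp [triMat]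
  rw [h00, h01, Fin.succAbove_zero]
  simp only [Fin.val_zero, pow_zero, one_mul, Fin.val_succ, pow_succ, pow_zero, mul_one]
  ring_nf
  congr 1
  rw [Fin.succ_zero_eq_one, Matrix.det_succ_column_zero, Fin.sum_univ_succ]
  have hz2 : ∀ i : Fin n,
      ((triMat (n+2) a).submatrix Fin.succ (1 : Fin (n+2)).succAbove) i.succ 0 = 0 := by
    intro i
    simp [triMat, Fin.succAbove]
  simp only [hz2, mul_zero, zero_mul, Finset.sum_const_zero, add_zero]
  have h10 : ((triMat (n+2) a).submatrix Fin.succ (1 : Fin (n+2)).succAbove) 0 0 = 1 := by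
    simp [triMat, Fin.succAbove]
  rw [h10, Fin.succAbove_zero, Matrix.submatrix_submatrix]
  have hc : ((1 : Fin (n+2)).succAbove ∘ Fin.succ) = (Fin.succ ∘ Fin.succ : Fin n → Fin (n+2)) := by
    funext j
    simp [Fin.one_succAbove_succ]
  rw [hc]
  simp

lemma cont_rec (n : ℕ) (a : ℕ → R) :
    cont (n + 2) a = a 1 * cont (n + 1) (fun i => a (i + 1)) - cont n (fun i => a (i + 2)) := by
  rw [cont, det_expand, tri_sub1, tri_sub2]
  rfl

lemma contE_rec (n : ℕ) (a : ℕ → R) :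
    contE (n + 2) a = a 1 * contE (n + 1) (fun i => a (i + 1)) - contE n (fun i => a (i + 2)) := by
  match n with
  | 0 => simp [contE, cont_one, cont_zero]
  | m + 1 => simpa [contE] using cont_rec m a

lemma slProd_cons (n : ℕ) (a : ℕ → R) :
    slProd (n + 1) a = slMat (a 1) * slProd n (fun i => a (i + 1)) := by
  simp only [slProd, List.range_succ_eq_map, List.map_cons, List.prod_cons, List.map_map]
  congr 1

lemma slProd_snoc (n : ℕ) (a : ℕ → R) :
    slProd (n + 1) a = slProd n a * slMat (a (n + 1)) := by
  simp [slProd, List.range_succ]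

lemma key_s11 (n : ℕ) (a : ℕ → R) :
    slProd (n + 1) a = !![cont (n + 1) a, cont n a;
      -(cont n (fun i => a (i + 1))), -(contE n (fun i => a (i + 1)))] := by
  induction n generalizing a with
  | zero =>
    rw [slProd_cons]
    simp [slProd, slMat, cont_one, cont_zero, contE]
  | succ m ih =>
    rw [slProd_cons, ih, slMat, Matrix.mul_fin_two]
    have e1 : (fun i => (fun j => a (j + 1)) (i + 1)) = (fun i => a (i + 2)) := by
      funext i; rfl
    rw [e1]
    have h1 : a 1 * cont (m + 1) (fun i => a (i+1)) + 1 * -(cont m fun i => a (i + 2))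
        = cont (m + 1 + 1) a := by rw [cont_rec]; ring
    have h2 : a 1 * cont m (fun i => a (i+1)) + 1 * -(contE m fun i => a (i + 2))
        = cont (m + 1) a := by
      have h : cont (m + 1) a
          = a 1 * cont m (fun i => a (i + 1)) - contE m (fun i => a (i + 2)) := contE_rec m a
      rw [h]; ring
    have h3 : -1 * cont (m+1) (fun i => a (i+1)) + 0 * -(cont m fun i => a (i + 2))
        = -(cont (m+1) fun i => a (i+1)) := by ring
    have h4 : -1 * cont m (fun i => a (i+1)) + 0 * -(contE m fun i => a (i + 2))
        = -(contE (m+1) fun i => a (i+1)) := by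
      have h : contE (m+1) (fun i => a (i+1)) = cont m (fun i => a (i+1)) := rfl
      rw [h]; ring
    rw [h1, h2, h3, h4]

lemma slMat_inv (x : R) : !![(0:R), -1; 1, x] * slMat x = 1 := by
  simp [slMat, Matrix.mul_fin_two, Matrix.one_fin_two]

lemma shift_neg_one (n : ℕ) (a : ℕ → R) (hn : 1 ≤ n) (hper : ∀ i, a (i + n) = a i)
    (hM : slProd n a = -1) : slProd n (fun i => a (i + 1)) = -1 := by
  obtain ⟨m, rfl⟩ : ∃ m, n = m + 1 := ⟨n - 1, by omega⟩
  have h1 : slMat (a 1) * slProd (m + 1) (fun i => a (i + 1)) = -slMat (a 1) := by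
    rw [← slProd_cons, slProd_snoc, hM]
    have : a (m + 1 + 1) = a 1 := by
      have := hper 1
      rw [show (1 + (m+1)) = m + 1 + 1 by ring] at this
      exact this
    rw [this, neg_one_mul]
  have h2 := congrArg (fun M => !![(0:R), -1; 1, a 1] * M) h1
  simp only [← Matrix.mul_assoc, slMat_inv, Matrix.one_mul] at h2
  rw [h2]
  rw [Matrix.mul_neg, slMat_inv]

theorem conway_coxeter_continuant_values (n : ℕ) (hn : 1 ≤ n) (a : ℕ → R)
    (hper : ∀ i, a (i + n) = a i)
    (hM : slProd n a = -1) :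
    ∀ i, 1 ≤ i →
      cont (n - 1) (fun j => a (i + j - 1)) = 0 ∧
      cont n (fun j => a (i + j - 1)) = -1 := by
  have main : ∀ k, slProd n (fun j => a (k + j)) = -1 := by
    intro k
    induction k with
    | zero => simpa using hM
    | succ l ih =>
      have hp : ∀ i, (fun j => a (l + j)) (i + n) = (fun j => a (l + j)) i := by
        intro i
        simp only
        rw [show l + (i + n) = (l + i) + n by ring, hper]
      have := shift_neg_one n (fun j => a (l + j)) hn hp ih
      have e : (fun i => a (l + (i + 1))) = (fun j => a (l + 1 + j)) := by
        funext i; congr 1; ring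
      rw [e] at this
      exact this
  intro i hi
  obtain ⟨k, rfl⟩ : ∃ k, i = k + 1 := ⟨i - 1, by omega⟩
  have e : (fun j => a (k + 1 + j - 1)) = (fun j => a (k + j)) := by
    funext j; congr 1; omega
  rw [e]
  obtain ⟨m, rfl⟩ : ∃ m, n = m + 1 := ⟨n - 1, by omega⟩
  have h := main k
  rw [key_s11] at h
  constructor
  · have := congrArg (fun M => M 0 1) h
    simpa using this
  · have := congrArg (fun M => M 0 0) h
    simpa using this
end
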